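/- arXiv:1504.05030 — 3 statements merged into one kernel-verified Lean document; each statement's English description precedes it below -/
import Mathlib

section
/- Let ξ^(s) : T^d → ℝ be nonnegative measurable functions in L^p (p ≥ 1), with pointwise radii of convergence R(a) of ∑_{s≥1} ξ^(s)(a) t^s, and R_inf = ess inf_a R(a). Assume that for every t with 0 ≤ t < R_inf the sum ξ(a,t) = ∑_{s≥1} ξ^(s)(a) t^s belongs to L^p. Then R_p ≥ R_inf, where R_p is the radius of convergence of ∑_{s≥1} ‖ξ^(s)‖_p t^s. -/
open MeasureTheory
open scoped ENNReal

/-- The radius of convergence of the power series `∑ c s * t ^ s`. -/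
noncomputable def seriesRadius (c : ℕ → ℝ) : ℝ≥0∞ :=
  sSup {r : ℝ≥0∞ | ∃ t : ℝ, r = ENNReal.ofReal t ∧ Summable (fun s : ℕ => c s * t ^ s)}

/-!
Fix `0 ≤ t < R_inf`. For almost every `a` the series `∑ ξ s a * t ^ s` converges with
nonnegative terms, so each term is dominated by the sum `ξ(a, t)`; taking `L^p` norms,
`‖ξ s‖_p * t ^ s ≤ ‖ξ(·, t)‖_p < ∞` for all `s`. A power series whose terms are bounded at `t`
converges at every smaller radius (Abel's lemma: compare with a geometric series), hence `R_p ≥ t`.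
-/

theorem ofReal_le_seriesRadius_of_summable {c : ℕ → ℝ} {t : ℝ}
    (h : Summable fun s => c s * t ^ s) : ENNReal.ofReal t ≤ seriesRadius c :=
  le_sSup ⟨t, rfl, h⟩

theorem summable_of_lt_seriesRadius {c : ℕ → ℝ} {t : ℝ} (hc : ∀ s, 0 ≤ c s) (ht : 0 ≤ t)
    (h : ENNReal.ofReal t < seriesRadius c) : Summable fun s => c s * t ^ s := by
  obtain ⟨_, ⟨u, rfl, hu⟩, htu⟩ := lt_sSup_iff.mp h
  have htu : t ≤ u := (ENNReal.ofReal_lt_ofReal_iff'.mp htu).1.le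
  exact hu.of_nonneg_of_le (fun s => mul_nonneg (hc s) (pow_nonneg ht s))
    fun s => mul_le_mul_of_nonneg_left (pow_le_pow_left₀ ht htu s) (hc s)

theorem ofReal_le_seriesRadius_of_bounded {c : ℕ → ℝ} {t C : ℝ}
    (hb : ∀ s, ‖c s‖ * t ^ s ≤ C) : ENNReal.ofReal t ≤ seriesRadius c := by
  refine le_of_forall_lt_imp_le_of_dense fun r hr => ?_
  obtain ⟨u, hu, rfl⟩ : ∃ u : ℝ, 0 ≤ u ∧ ENNReal.ofReal u = r :=
    ⟨r.toReal, ENNReal.toReal_nonneg, ENNReal.ofReal_toReal hr.ne_top⟩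
  have hut : u < t := (ENNReal.ofReal_lt_ofReal_iff'.mp hr).1
  have ht : 0 < t := hu.trans_lt hut
  refine ofReal_le_seriesRadius_of_summable <|
    Summable.of_norm_bounded ((summable_geometric_of_lt_one (div_nonneg hu ht.le)
      ((div_lt_one ht).mpr hut)).mul_left C) fun s => ?_
  calc ‖c s * u ^ s‖ = ‖c s‖ * t ^ s * (u / t) ^ s := by
        rw [norm_mul, norm_pow, Real.norm_of_nonneg hu, div_pow,
          mul_assoc, mul_div_cancel₀ _ (pow_pos ht s).ne']
    _ ≤ C * (u / t) ^ s := by gcongr; exact hb s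

theorem eLpNorm_le_eLpNorm_tsum {α : Type*} [MeasurableSpace α] {μ : Measure α} {p : ℝ≥0∞}
    {f : ℕ → α → ℝ} (hf : ∀ s a, 0 ≤ f s a) (hsum : ∀ᵐ a ∂μ, Summable fun s => f s a)
    (s : ℕ) : eLpNorm (f s) p μ ≤ eLpNorm (fun a => ∑' s, f s a) p μ := by
  refine eLpNorm_mono_ae ?_
  filter_upwards [hsum] with a ha
  rw [Real.norm_of_nonneg (hf s a), Real.norm_of_nonneg (tsum_nonneg (hf · a))]
  exact ha.le_tsum s fun j _ => hf j a

theorem stmt2_general (d : ℕ) (p : ℝ≥0∞)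
    (ξ : ℕ → (Fin d → AddCircle (1:ℝ)) → ℝ)
    (hpos : ∀ s a, 0 ≤ ξ s a)
    (hsum : ∀ t : ℝ, 0 ≤ t →
      ENNReal.ofReal t < essInf (fun a => seriesRadius (fun s => ξ s a)) volume →
      MemLp (fun a => ∑' s : ℕ, ξ s a * t ^ s) p volume) :
    essInf (fun a => seriesRadius (fun s => ξ s a)) volume ≤
      seriesRadius (fun s => (eLpNorm (ξ s) p volume).toReal) := by
  refine le_of_forall_lt_imp_le_of_dense fun r hr => ?_
  obtain ⟨t, ht, rfl⟩ : ∃ t : ℝ, 0 ≤ t ∧ ENNReal.ofReal t = r :=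
    ⟨r.toReal, ENNReal.toReal_nonneg, ENNReal.ofReal_toReal hr.ne_top⟩
  have hterm_nonneg : ∀ s a, 0 ≤ ξ s a * t ^ s := fun s a =>
    mul_nonneg (hpos s a) (pow_nonneg ht s)
  have hae : ∀ᵐ a, Summable fun s => ξ s a * t ^ s := by
    filter_upwards [ae_lt_of_lt_essInf hr] with a ha
    exact summable_of_lt_seriesRadius (hpos · a) ht ha
  have hF_ne_top := (hsum t ht hr).eLpNorm_ne_top
  refine ofReal_le_seriesRadius_of_bounded
    (C := (eLpNorm (fun a => ∑' s, ξ s a * t ^ s) p volume).toReal) fun s => ?_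
  have hle := eLpNorm_le_eLpNorm_tsum (p := p) hterm_nonneg hae s
  rw [show (fun a => ξ s a * t ^ s) = t ^ s • ξ s from funext fun a => mul_comm _ _,
    eLpNorm_const_smul, Real.enorm_of_nonneg (pow_nonneg ht s)] at hle
  simpa only [ENNReal.toReal_mul, ENNReal.toReal_ofReal (pow_nonneg ht s), mul_comm,
    Real.norm_of_nonneg ENNReal.toReal_nonneg] using ENNReal.toReal_mono hF_ne_top hle

/-- For nonnegative measurable `ξ s` in `L^p` on the torus, if for every
`0 ≤ t < R_inf = ess inf_a R(a)` the sum `ξ(a,t) = ∑ ξ s a * t^s` belongs to `L^p`,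
then the radius of convergence `R_p` of the series of `L^p` norms satisfies
`R_p ≥ R_inf`. -/
theorem stmt2 (d : ℕ) (p : ℝ≥0∞) (hp : 1 ≤ p)
    (ξ : ℕ → (Fin d → AddCircle (1:ℝ)) → ℝ)
    (hmeas : ∀ s, Measurable (ξ s))
    (hpos : ∀ s a, 0 ≤ ξ s a)
    (hLp : ∀ s, MemLp (ξ s) p volume)
    (hsum : ∀ t : ℝ, 0 ≤ t →
      ENNReal.ofReal t < essInf (fun a => seriesRadius (fun s => ξ s a)) volume →
      MemLp (fun a => ∑' s : ℕ, ξ s a * t ^ s) p volume) :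
    essInf (fun a => seriesRadius (fun s => ξ s a)) volume ≤
      seriesRadius (fun s => (eLpNorm (ξ s) p volume).toReal) :=
  stmt2_general d p ξ hpos hsum
end

section
/- There exist nonnegative measurable functions ξ^(s) on [0,1], each in L^p for a given p > 1, such that the series ∑_{s≥1} ξ^(s)(a) t^s converges for every t ∈ ℝ and every a ∈ (0,1] (so the pointwise radius of convergence is infinite for all a), while the series of norms ∑_{s≥1} ‖ξ^(s)‖_p t^s has a prescribed finite radius of convergence R_p = 1/γ for any given γ ≥ 1. -/
open MeasureTheory
open scoped ENNReal

/-!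
Take `ξ s` to be a constant multiple of the indicator of `(1/(s+2), 1/(s+1)]`, scaled so that
`‖ξ s‖_p = γ ^ s`. For fixed `a > 0` only finitely many `ξ s a` are nonzero, so
`∑ ξ s a * t ^ s` is a finite sum, whereas `∑ γ ^ s t ^ s` is a geometric series of radius `1/γ`.
-/

open Set

lemma summable_pow_mul_pow_iff (γ t : ℝ) :
    Summable (fun s : ℕ => γ ^ s * t ^ s) ↔ |γ * t| < 1 := by
  simp_rw [← mul_pow]
  exact summable_geometric_iff_norm_lt_one

lemma seriesRadius_pow {γ : ℝ} (hγ : 0 < γ) :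
    seriesRadius (fun s => γ ^ s) = ENNReal.ofReal (1 / γ) := by
  apply le_antisymm
  · refine sSup_le ?_
    rintro _ ⟨t, rfl, ht⟩
    rw [summable_pow_mul_pow_iff] at ht
    refine ENNReal.ofReal_le_ofReal ?_
    rw [le_div_iff₀ hγ]
    linarith [le_abs_self (γ * t)]
  · refine le_of_forall_lt fun r hr => ?_
    obtain ⟨q, hq0, hrq, hq⟩ := ENNReal.lt_iff_exists_real_btwn.mp hr
    rw [ENNReal.ofReal_lt_ofReal_iff (by positivity), lt_div_iff₀ hγ] at hq
    refine hrq.trans_le (le_sSup ⟨q, rfl, ?_⟩)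
    rw [summable_pow_mul_pow_iff, abs_of_nonneg (by positivity)]
    linarith

lemma toReal_eLpNorm_indicator_const_div_rpow {α : Type*} [MeasurableSpace α] {μ : Measure α}
    [IsFiniteMeasure μ] {s : Set α} (hs : MeasurableSet s) (hμs : μ s ≠ 0) {p : ℝ} (hp : 0 < p)
    {c : ℝ} (hc : 0 ≤ c) :
    (eLpNorm (s.indicator fun _ => c / (μ s).toReal ^ (1 / p)) (ENNReal.ofReal p) μ).toReal
      = c := by
  have hm : 0 < (μ s).toReal ^ (1 / p) :=
    Real.rpow_pos_of_pos (ENNReal.toReal_pos hμs (measure_ne_top μ s)) _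
  rw [eLpNorm_indicator_const hs (by simpa using hp) ENNReal.ofReal_ne_top,
    ENNReal.toReal_mul, ← ENNReal.toReal_rpow, ENNReal.toReal_ofReal hp.le, toReal_enorm,
    Real.norm_of_nonneg (by positivity), div_mul_cancel₀ _ hm.ne']

def harmonicPiece (s : ℕ) : Set ℝ := Ioc (1 / ((s : ℝ) + 2)) (1 / ((s : ℝ) + 1))

lemma harmonicPiece_subset_Ioc (s : ℕ) : harmonicPiece s ⊆ Ioc 0 1 := fun _ hx =>
  ⟨lt_trans (by positivity) hx.1, hx.2.trans (div_le_one_of_le₀ (by linarith) (by positivity))⟩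

lemma volume_restrict_harmonicPiece_ne_zero (s : ℕ) :
    volume.restrict (Ioc (0 : ℝ) 1) (harmonicPiece s) ≠ 0 := by
  rw [Measure.restrict_apply (t := harmonicPiece s) measurableSet_Ioc,
    inter_eq_self_of_subset_left (harmonicPiece_subset_Ioc s), harmonicPiece, Real.volume_Ioc,
    ne_eq, ENNReal.ofReal_eq_zero, not_le, sub_pos]
  exact one_div_lt_one_div_of_lt (by positivity) (by linarith)

lemma notMem_harmonicPiece {a : ℝ} (ha : 0 < a) {s : ℕ} (hs : 1 / a ≤ s) :
    a ∉ harmonicPiece s := fun hmem => by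
  have : 1 / ((s : ℝ) + 1) < a := by
    rw [div_lt_iff₀ (by positivity)]
    rw [div_le_iff₀ ha] at hs
    nlinarith
  exact absurd hmem.2 this.not_ge

theorem exists_pointwise_summable_with_eLpNorm_eq {p : ℝ} (hp : 0 < p) (c : ℕ → ℝ)
    (hc : ∀ s, 0 ≤ c s) :
    ∃ ξ : ℕ → ℝ → ℝ,
      (∀ s, Measurable (ξ s)) ∧
      (∀ s a, 0 ≤ ξ s a) ∧
      (∀ s, MemLp (ξ s) (ENNReal.ofReal p) (volume.restrict (Ioc (0:ℝ) 1))) ∧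
      (∀ (t a : ℝ), 0 < a → Summable (fun s : ℕ => ξ s a * t ^ s)) ∧
      (∀ s, (eLpNorm (ξ s) (ENNReal.ofReal p) (volume.restrict (Ioc (0:ℝ) 1))).toReal = c s) := by
  set μ := volume.restrict (Ioc (0:ℝ) 1)
  set height : ℕ → ℝ := fun s => c s / (μ (harmonicPiece s)).toReal ^ (1 / p)
  have height_nonneg (s : ℕ) : 0 ≤ height s := div_nonneg (hc s) (by positivity)
  refine ⟨fun s => (harmonicPiece s).indicator fun _ => height s,
    fun s => measurable_const.indicator measurableSet_Ioc,
    fun s => indicator_nonneg fun _ _ => height_nonneg s,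
    fun s => memLp_indicator_const _ measurableSet_Ioc _ (Or.inr (measure_ne_top μ _)),
    fun t a ha => ?_,
    fun s => toReal_eLpNorm_indicator_const_div_rpow measurableSet_Ioc
      (volume_restrict_harmonicPiece_ne_zero s) hp (hc s)⟩
  refine summable_of_ne_finset_zero (s := Finset.range ⌈1 / a⌉₊) fun s hs => ?_
  rw [Finset.mem_range, not_lt, Nat.ceil_le] at hs
  simp only [indicator_of_notMem (notMem_harmonicPiece ha hs), zero_mul]

/-- Counterexample: there exist nonnegative measurable functions `ξ s` on `(0,1]`, each in
`L^p`, whose pointwise series `∑ ξ s a * t^s` converges for every `t` and every `a ∈ (0,1]`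
(infinite pointwise radius of convergence), while the series of `L^p` norms has any
prescribed finite radius of convergence `1/γ`, for any `γ ≥ 1`. -/
theorem stmt5 (p : ℝ) (hp : 1 < p) (γ : ℝ) (hγ : 1 ≤ γ) :
    ∃ ξ : ℕ → ℝ → ℝ,
      (∀ s, Measurable (ξ s)) ∧
      (∀ s a, 0 ≤ ξ s a) ∧
      (∀ s, MemLp (ξ s) (ENNReal.ofReal p) (volume.restrict (Set.Ioc (0:ℝ) 1))) ∧
      (∀ (t : ℝ), ∀ a ∈ Set.Ioc (0:ℝ) 1, Summable (fun s : ℕ => ξ s a * t ^ s)) ∧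
      seriesRadius
          (fun s => (eLpNorm (ξ s) (ENNReal.ofReal p) (volume.restrict (Set.Ioc (0:ℝ) 1))).toReal)
        = ENNReal.ofReal (1 / γ) := by
  have hγ0 : 0 < γ := one_pos.trans_le hγ
  obtain ⟨ξ, hmeas, hnonneg, hmem, hsum, hnorm⟩ :=
    exists_pointwise_summable_with_eLpNorm_eq (one_pos.trans hp) (fun s => γ ^ s)
      fun s => by positivity
  refine ⟨ξ, hmeas, hnonneg, hmem, fun t a ha => hsum t a ha.1, ?_⟩
  simp only [hnorm]
  exact seriesRadius_pow hγ0
end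

section
/- Let x : T^3 × ℝ → ℝ^3 be a smooth family of maps solving Newton's equation ẍ(a,t) = −(∇p)(x(a,t),t) for a smooth function p, with x(a,0) = a and ẋ(a,0) = v₀(a). Then ∇^L × (∑_{k=1}^3 ẋ_k ∇^L x_k) = ∇^L × v₀ for all t; equivalently, the Cauchy invariant ∑_{k=1}^3 ∇^L ẋ_k × ∇^L x_k is independent of t and equals ω₀ = ∇ × v₀. -/
/-- Partial derivative in the `i`-th coordinate direction. -/
noncomputable def pd {d : ℕ} (i : Fin d) (f : (Fin d → ℝ) → ℝ) (a : Fin d → ℝ) : ℝ :=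
  fderiv ℝ f a (Pi.single i 1)

/-- The gradient of a scalar function. -/
noncomputable def grad3 (f : (Fin 3 → ℝ) → ℝ) (a : Fin 3 → ℝ) : Fin 3 → ℝ :=
  fun i => pd i f a

/-- Cross product in ℝ³. -/
noncomputable def cross3 (u v : Fin 3 → ℝ) : Fin 3 → ℝ :=
  ![u 1 * v 2 - u 2 * v 1, u 2 * v 0 - u 0 * v 2, u 0 * v 1 - u 1 * v 0]

/-- Curl of a vector field in ℝ³. -/
noncomputable def curl3 (v : (Fin 3 → ℝ) → (Fin 3 → ℝ)) (a : Fin 3 → ℝ) : Fin 3 → ℝ :=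
  ![pd 1 (fun y => v y 2) a - pd 2 (fun y => v y 1) a,
    pd 2 (fun y => v y 0) a - pd 0 (fun y => v y 2) a,
    pd 0 (fun y => v y 1) a - pd 1 (fun y => v y 0) a]

open ContinuousLinearMap in
lemma hasFDerivAt_slice {E F : Type*} [NormedAddCommGroup E] [NormedSpace ℝ E]
    [NormedAddCommGroup F] [NormedSpace ℝ F]
    {g : E × ℝ → F} {a : E} {t : ℝ} (hg : DifferentiableAt ℝ g (a, t)) :
    HasFDerivAt (fun b => g (b, t)) ((fderiv ℝ g (a, t)).comp (inl ℝ E ℝ)) a :=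
  hg.hasFDerivAt.comp a (hasFDerivAt_prodMk_left a t)

lemma hasDerivAt_slice {E F : Type*} [NormedAddCommGroup E] [NormedSpace ℝ E]
    [NormedAddCommGroup F] [NormedSpace ℝ F]
    {g : E × ℝ → F} {a : E} {t : ℝ} (hg : DifferentiableAt ℝ g (a, t)) :
    HasDerivAt (fun s => g (a, s)) (fderiv ℝ g (a, t) (0, 1)) t := by
  have h1 : HasDerivAt (fun s : ℝ => ((a : E), s)) ((0 : E), (1 : ℝ)) t :=
    (hasDerivAt_const t a).prodMk (hasDerivAt_id t)
  exact hg.hasFDerivAt.comp_hasDerivAt t h1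

lemma pd_slice {g : (Fin 3 → ℝ) × ℝ → ℝ} {a : Fin 3 → ℝ} {t : ℝ}
    (hg : DifferentiableAt ℝ g (a, t)) (j : Fin 3) :
    pd j (fun b => g (b, t)) a = fderiv ℝ g (a, t) (Pi.single j 1, 0) := by
  rw [pd, (hasFDerivAt_slice hg).fderiv]
  simp

lemma mixed_partial_swap {g : (Fin 3 → ℝ) × ℝ → ℝ} (hg : ContDiff ℝ (⊤ : ℕ∞) g)
    (a : Fin 3 → ℝ) (j : Fin 3) (t : ℝ) :
    HasDerivAt (fun s => pd j (fun b => g (b, s)) a)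
      (pd j (fun b => deriv (fun s => g (b, s)) t) a) t := by
  have hdiff : Differentiable ℝ g := hg.differentiable (by simp)
  have hA : ContDiff ℝ (⊤ : ℕ∞) (fderiv ℝ g) := hg.fderiv_right (by simp)
  have hAdiff : Differentiable ℝ (fderiv ℝ g) := hA.differentiable (by simp)
  set A := fderiv ℝ g with hAdef
  set H := fderiv ℝ A (a, t) with hHdef
  have hsymm : ∀ v w, H v w = H w v :=
    second_derivative_symmetric (fun y => (hdiff y).hasFDerivAt)
      (hAdiff (a, t)).hasFDerivAt
  have h1 : (fun s => pd j (fun b => g (b, s)) a)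
      = fun s => A (a, s) (Pi.single j 1, 0) := by
    funext s; exact pd_slice (hdiff _) j
  have hAt : HasDerivAt (fun s => A (a, s)) (H (0, 1)) t := hasDerivAt_slice (hAdiff (a, t))
  have h2 : HasDerivAt (fun s => A (a, s) ((Pi.single j 1 : Fin 3 → ℝ), (0 : ℝ)))
      (H (0, 1) (Pi.single j 1, 0)) t := by
    have := hAt.clm_apply (hasDerivAt_const t ((Pi.single j 1 : Fin 3 → ℝ), (0 : ℝ)))
    simpa using this
  have h3 : (fun b => deriv (fun s => g (b, s)) t) = fun b => A (b, t) (0, 1) := by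
    funext b; exact (hasDerivAt_slice (hdiff (b, t))).deriv
  have h4 : pd j (fun b => A (b, t) ((0 : Fin 3 → ℝ), (1 : ℝ))) a
      = H (Pi.single j 1, 0) (0, 1) := by
    have h5 := (hasFDerivAt_slice (g := A) (hAdiff (a, t))).clm_apply
      (hasFDerivAt_const ((0 : Fin 3 → ℝ), (1 : ℝ)) a)
    rw [pd, h5.fderiv]
    simp
    rfl
  rw [h1, h3, h4, ← hsymm]
  exact h2

lemma pd_fderiv_apply {q : (Fin 3 → ℝ) → ℝ} (hq : ContDiff ℝ (⊤ : ℕ∞) q) (y : Fin 3 → ℝ)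
    (m k : Fin 3) :
    pd m (fun z => fderiv ℝ q z (Pi.single k 1)) y
      = fderiv ℝ (fderiv ℝ q) y (Pi.single m 1) (Pi.single k 1) := by
  have hA : Differentiable ℝ (fderiv ℝ q) := (hq.fderiv_right (m := (⊤ : ℕ∞)) (by simp)).differentiable (by simp)
  have h := (hA y).hasFDerivAt.clm_apply
    (hasFDerivAt_const ((Pi.single k 1 : Fin 3 → ℝ)) y)
  rw [pd, h.fderiv]
  simp

lemma pd_pd_symm {q : (Fin 3 → ℝ) → ℝ} (hq : ContDiff ℝ (⊤ : ℕ∞) q) (y : Fin 3 → ℝ)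
    (m k : Fin 3) :
    fderiv ℝ (fderiv ℝ q) y (Pi.single m 1) (Pi.single k 1)
      = fderiv ℝ (fderiv ℝ q) y (Pi.single k 1) (Pi.single m 1) :=
  second_derivative_symmetric (fun z => ((hq.differentiable (by simp)) z).hasFDerivAt)
    (((hq.fderiv_right (m := (⊤ : ℕ∞)) (by simp)).differentiable (by simp) y).hasFDerivAt) _ _

lemma pd_comp {G : (Fin 3 → ℝ) → ℝ} {φ : (Fin 3 → ℝ) → (Fin 3 → ℝ)} {a : Fin 3 → ℝ}
    (hG : DifferentiableAt ℝ G (φ a)) (hφ : DifferentiableAt ℝ φ a) (j : Fin 3) :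
    pd j (fun b => G (φ b)) a = ∑ m, pd m G (φ a) * pd j (fun b => φ b m) a := by
  have hc : HasFDerivAt (fun b => G (φ b))
      ((fderiv ℝ G (φ a)).comp (fderiv ℝ φ a)) a :=
    hG.hasFDerivAt.comp a hφ.hasFDerivAt
  rw [pd, hc.fderiv]
  set u := fderiv ℝ φ a (Pi.single j 1) with hu_def
  have hu : ∀ m, u m = pd j (fun b => φ b m) a := by
    intro m
    have hm : HasFDerivAt (fun b => φ b m)
        ((ContinuousLinearMap.proj (R := ℝ) (φ := fun _ : Fin 3 => ℝ) m).comp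
          (fderiv ℝ φ a)) a :=
      (ContinuousLinearMap.proj (R := ℝ) (φ := fun _ : Fin 3 => ℝ)
        m).hasFDerivAt.comp a hφ.hasFDerivAt
    rw [pd, hm.fderiv]
    rfl
  have hexp : u = ∑ m, u m • (Pi.single m 1 : Fin 3 → ℝ) := by
    rw [← Finset.univ_sum_single u]
    congr 1
    funext m
    rw [Finset.univ_sum_single u]
    funext l
    rcases eq_or_ne m l with h | h <;> simp [Pi.single_apply, h]
  calc (fderiv ℝ G (φ a)).comp (fderiv ℝ φ a) (Pi.single j 1)
      = fderiv ℝ G (φ a) u := rfl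
    _ = ∑ m, u m * fderiv ℝ G (φ a) (Pi.single m 1) := by
        conv_lhs => rw [hexp]
        rw [map_sum]
        exact Finset.sum_congr rfl fun m _ => by rw [map_smul]; rfl
    _ = ∑ m, pd m G (φ a) * pd j (fun b => φ b m) a := by
        refine Finset.sum_congr rfl fun m _ => ?_
        rw [hu m, mul_comm]
        rfl

lemma deriv_comp_proj {c : ℝ → (Fin 3 → ℝ)} {t : ℝ} (hc : DifferentiableAt ℝ c t)
    (k : Fin 3) : deriv (fun s => c s k) t = deriv c t k := by
  have h := (ContinuousLinearMap.proj (R := ℝ) (φ := fun _ : Fin 3 => ℝ)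
    k).hasFDerivAt.comp_hasDerivAt t hc.hasDerivAt
  exact h.deriv

lemma pd_proj (a : Fin 3 → ℝ) (j k : Fin 3) :
    pd j (fun b : Fin 3 → ℝ => b k) a = (Pi.single j 1 : Fin 3 → ℝ) k := by
  have h : HasFDerivAt (fun b : Fin 3 → ℝ => b k)
      (ContinuousLinearMap.proj (R := ℝ) (φ := fun _ : Fin 3 => ℝ) k) a :=
    (ContinuousLinearMap.proj (R := ℝ) (φ := fun _ : Fin 3 => ℝ) k).hasFDerivAt
  rw [pd, h.fderiv]
  rfl

lemma pd_neg {f : (Fin 3 → ℝ) → ℝ} (a : Fin 3 → ℝ) (j : Fin 3) :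
    pd j (fun b => -(f b)) a = -pd j f a := by
  rw [pd, pd, fderiv_fun_neg]
  rfl

/-- Cauchy invariants: for a smooth family of trajectories solving Newton's equation
`ẍ(a,t) = -(∇p)(x(a,t),t)` with `x(a,0) = a` and `ẋ(a,0) = v₀(a)`, the quantity
`∑ₖ ∇ᴸẋ_k × ∇ᴸx_k` is independent of time and equals the initial vorticity `∇ × v₀`. -/
theorem stmt7 (x : (Fin 3 → ℝ) → ℝ → (Fin 3 → ℝ)) (p : (Fin 3 → ℝ) → ℝ → ℝ)
    (v₀ : (Fin 3 → ℝ) → (Fin 3 → ℝ))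
    (hx : ContDiff ℝ (⊤ : ℕ∞) fun q : (Fin 3 → ℝ) × ℝ => x q.1 q.2)
    (hp : ContDiff ℝ (⊤ : ℕ∞) fun q : (Fin 3 → ℝ) × ℝ => p q.1 q.2)
    (hnewton : ∀ a t, deriv (deriv (x a)) t = fun k => -(pd k (fun y => p y t) (x a t)))
    (hinit : ∀ a, x a 0 = a)
    (hvel : ∀ a, deriv (x a) 0 = v₀ a) :
    ∀ a t,
      (∑ k : Fin 3, cross3 (grad3 (fun b => deriv (x b) t k) a)
                           (grad3 (fun b => x b t k) a))
        = curl3 v₀ a := by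
  intro a t₀
  -- basic smoothness facts
  have hXk : ∀ k : Fin 3, ContDiff ℝ (⊤ : ℕ∞) (fun q : (Fin 3 → ℝ) × ℝ => x q.1 q.2 k) := fun k =>
    (ContinuousLinearMap.proj (R := ℝ) (φ := fun _ : Fin 3 => ℝ) k).contDiff.comp hx
  have hxdiff : Differentiable ℝ (fun q : (Fin 3 → ℝ) × ℝ => x q.1 q.2) :=
    hx.differentiable (by simp)
  have hxb : ∀ b, Differentiable ℝ (x b) := by
    intro b
    have : Differentiable ℝ (fun s : ℝ => x b s) :=
      fun s => (hxdiff (b, s)).comp s ((differentiableAt_const b).prodMk differentiableAt_id)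
    exact this
  have hderiv_xb_eq : ∀ b, deriv (x b)
      = fun s => fderiv ℝ (fun q : (Fin 3 → ℝ) × ℝ => x q.1 q.2) (b, s)
          ((0 : Fin 3 → ℝ), (1 : ℝ)) := by
    intro b
    funext s
    exact (hasDerivAt_slice (hxdiff (b, s))).deriv
  have hderiv_xb_diff : ∀ b, Differentiable ℝ (deriv (x b)) := by
    intro b
    rw [hderiv_xb_eq b]
    have h1 : ContDiff ℝ (⊤ : ℕ∞) (fun q : (Fin 3 → ℝ) × ℝ =>
        fderiv ℝ (fun q : (Fin 3 → ℝ) × ℝ => x q.1 q.2) q ((0 : Fin 3 → ℝ), (1 : ℝ))) :=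
      (hx.fderiv_right (by simp)).clm_apply contDiff_const
    exact fun s => ((h1.differentiable (by simp)) (b, s)).comp s
      ((differentiableAt_const b).prodMk differentiableAt_id)
  -- gk : jointly smooth version of (b,s) ↦ deriv (x b) s k
  have hgk : ∀ k : Fin 3, ContDiff ℝ (⊤ : ℕ∞) (fun q : (Fin 3 → ℝ) × ℝ =>
      fderiv ℝ (fun q : (Fin 3 → ℝ) × ℝ => x q.1 q.2 k) q ((0 : Fin 3 → ℝ), (1 : ℝ))) :=
    fun k => ((hXk k).fderiv_right (by simp)).clm_apply contDiff_const
  have hgk_eq : ∀ (b : Fin 3 → ℝ) (s : ℝ) (k : Fin 3),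
      fderiv ℝ (fun q : (Fin 3 → ℝ) × ℝ => x q.1 q.2 k) (b, s)
          ((0 : Fin 3 → ℝ), (1 : ℝ)) = deriv (x b) s k := by
    intro b s k
    have h1 : deriv (fun r => x b r k) s
        = fderiv ℝ (fun q : (Fin 3 → ℝ) × ℝ => x q.1 q.2 k) (b, s)
            ((0 : Fin 3 → ℝ), (1 : ℝ)) :=
      (hasDerivAt_slice (((hXk k).differentiable (by simp)) (b, s))).deriv
    rw [← h1]
    exact deriv_comp_proj (hxb b s) k
  -- slices of x are differentiable in the space variable
  have hφdiff : ∀ t : ℝ, DifferentiableAt ℝ (fun b => x b t) a := by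
    intro t
    exact (hasFDerivAt_slice (g := fun q : (Fin 3 → ℝ) × ℝ => x q.1 q.2)
      (hxdiff (a, t))).differentiableAt
  -- Step A: d/dt (∂ⱼ x_k) = ∂ⱼ (ẋ_k)
  have stepA : ∀ (j k : Fin 3) (t : ℝ),
      HasDerivAt (fun s => pd j (fun b => x b s k) a)
        (pd j (fun b => deriv (x b) t k) a) t := by
    intro j k t
    have h : HasDerivAt (fun s => pd j (fun b => x b s k) a)
        (pd j (fun b => deriv (fun s => x b s k) t) a) t :=
      mixed_partial_swap (hXk k) a j t
    have e : (fun b => deriv (fun s => x b s k) t) = fun b => deriv (x b) t k :=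
      funext fun b => deriv_comp_proj (hxb b t) k
    rw [e] at h
    exact h
  -- Step B: d/dt (∂ⱼ ẋ_k) = ∂ⱼ (ẍ_k) = ∂ⱼ (-(∂ₖp)(x,t))
  have stepB : ∀ (j k : Fin 3) (t : ℝ),
      HasDerivAt (fun s => pd j (fun b => deriv (x b) s k) a)
        (pd j (fun b => -(pd k (fun y => p y t) (x b t))) a) t := by
    intro j k t
    have h : HasDerivAt (fun s => pd j (fun b =>
          fderiv ℝ (fun q : (Fin 3 → ℝ) × ℝ => x q.1 q.2 k) (b, s)
            ((0 : Fin 3 → ℝ), (1 : ℝ))) a)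
        (pd j (fun b => deriv (fun s =>
          fderiv ℝ (fun q : (Fin 3 → ℝ) × ℝ => x q.1 q.2 k) (b, s)
            ((0 : Fin 3 → ℝ), (1 : ℝ))) t) a) t :=
      mixed_partial_swap (hgk k) a j t
    have e1 : (fun s => pd j (fun b =>
          fderiv ℝ (fun q : (Fin 3 → ℝ) × ℝ => x q.1 q.2 k) (b, s)
            ((0 : Fin 3 → ℝ), (1 : ℝ))) a)
        = fun s => pd j (fun b => deriv (x b) s k) a := by
      funext s
      congr 1
      funext b
      exact hgk_eq b s k
    have e2 : (fun b => deriv (fun s =>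
          fderiv ℝ (fun q : (Fin 3 → ℝ) × ℝ => x q.1 q.2 k) (b, s)
            ((0 : Fin 3 → ℝ), (1 : ℝ))) t)
        = fun b => -(pd k (fun y => p y t) (x b t)) := by
      funext b
      have e3 : (fun s => fderiv ℝ (fun q : (Fin 3 → ℝ) × ℝ => x q.1 q.2 k) (b, s)
          ((0 : Fin 3 → ℝ), (1 : ℝ))) = fun s => deriv (x b) s k :=
        funext fun s => hgk_eq b s k
      rw [e3]
      have e4 : deriv (fun s => deriv (x b) s k) t = deriv (deriv (x b)) t k :=
        deriv_comp_proj (hderiv_xb_diff b t) k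
      rw [e4, hnewton b t]
    rw [e1, e2] at h
    exact h
  -- pressure slice smoothness
  have hqt : ∀ t : ℝ, ContDiff ℝ (⊤ : ℕ∞) (fun y => p y t) := by
    intro t
    exact hp.comp (contDiff_id.prodMk contDiff_const)
  -- acceleration gradient expansion via chain rule
  have haccel : ∀ (t : ℝ) (j k : Fin 3),
      pd j (fun b => -(pd k (fun y => p y t) (x b t))) a
        = -∑ m, fderiv ℝ (fderiv ℝ (fun y => p y t)) (x a t)
            (Pi.single m 1) (Pi.single k 1) * pd j (fun b => x b t m) a := by
    intro t j k
    have h1 : pd j (fun b => -(pd k (fun y => p y t) (x b t))) a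
        = -pd j (fun b => pd k (fun y => p y t) (x b t)) a :=
      pd_neg a j
    have hGdiff : DifferentiableAt ℝ (fun z => pd k (fun y => p y t) z) (x a t) := by
      have : Differentiable ℝ (fun z =>
          fderiv ℝ (fun y => p y t) z (Pi.single k 1)) :=
        (((hqt t).fderiv_right (m := (⊤ : ℕ∞)) (by simp)).clm_apply contDiff_const).differentiable (by simp)
      exact this (x a t)
    have h2 : pd j (fun b => pd k (fun y => p y t) (x b t)) a
        = ∑ m, pd m (fun z => pd k (fun y => p y t) z) (x a t)
            * pd j (fun b => x b t m) a :=
      pd_comp hGdiff (hφdiff t) j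
    have h3 : ∀ m, pd m (fun z => pd k (fun y => p y t) z) (x a t)
        = fderiv ℝ (fderiv ℝ (fun y => p y t)) (x a t) (Pi.single m 1) (Pi.single k 1) :=
      fun m => pd_fderiv_apply (hqt t) (x a t) m k
    rw [h1, h2]
    congr 1
    exact Finset.sum_congr rfl fun m _ => by rw [h3 m]
  -- the key invariance for each index pair
  have key : ∀ j₁ j₂ : Fin 3,
      (∑ k : Fin 3, (pd j₁ (fun b => deriv (x b) t₀ k) a * pd j₂ (fun b => x b t₀ k) a
        - pd j₂ (fun b => deriv (x b) t₀ k) a * pd j₁ (fun b => x b t₀ k) a))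
        = pd j₁ (fun b => v₀ b j₂) a - pd j₂ (fun b => v₀ b j₁) a := by
    intro j₁ j₂
    set Φ : ℝ → ℝ := fun t => ∑ k : Fin 3,
      (pd j₁ (fun b => deriv (x b) t k) a * pd j₂ (fun b => x b t k) a
        - pd j₂ (fun b => deriv (x b) t k) a * pd j₁ (fun b => x b t k) a) with hΦ
    have hderivΦ : ∀ t, HasDerivAt Φ 0 t := by
      intro t
      have hsum : HasDerivAt Φ (∑ k : Fin 3,
          ((pd j₁ (fun b => -(pd k (fun y => p y t) (x b t))) a
              * pd j₂ (fun b => x b t k) a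
            + pd j₁ (fun b => deriv (x b) t k) a * pd j₂ (fun b => deriv (x b) t k) a)
          - (pd j₂ (fun b => -(pd k (fun y => p y t) (x b t))) a
              * pd j₁ (fun b => x b t k) a
            + pd j₂ (fun b => deriv (x b) t k) a * pd j₁ (fun b => deriv (x b) t k) a))) t := by
        refine HasDerivAt.fun_sum fun k _ => ?_
        exact ((stepB j₁ k t).mul (stepA j₂ k t)).sub ((stepB j₂ k t).mul (stepA j₁ k t))
      have hzero : (∑ k : Fin 3,
          ((pd j₁ (fun b => -(pd k (fun y => p y t) (x b t))) a
              * pd j₂ (fun b => x b t k) a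
            + pd j₁ (fun b => deriv (x b) t k) a * pd j₂ (fun b => deriv (x b) t k) a)
          - (pd j₂ (fun b => -(pd k (fun y => p y t) (x b t))) a
              * pd j₁ (fun b => x b t k) a
            + pd j₂ (fun b => deriv (x b) t k) a * pd j₁ (fun b => deriv (x b) t k) a))) = 0 := by
        have hsimp : ∀ k : Fin 3,
            (pd j₁ (fun b => -(pd k (fun y => p y t) (x b t))) a
                * pd j₂ (fun b => x b t k) a
              + pd j₁ (fun b => deriv (x b) t k) a * pd j₂ (fun b => deriv (x b) t k) a)
            - (pd j₂ (fun b => -(pd k (fun y => p y t) (x b t))) a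
                * pd j₁ (fun b => x b t k) a
              + pd j₂ (fun b => deriv (x b) t k) a * pd j₁ (fun b => deriv (x b) t k) a)
            = (-∑ m, fderiv ℝ (fderiv ℝ (fun y => p y t)) (x a t)
                  (Pi.single m 1) (Pi.single k 1) * pd j₁ (fun b => x b t m) a)
                * pd j₂ (fun b => x b t k) a
              - (-∑ m, fderiv ℝ (fderiv ℝ (fun y => p y t)) (x a t)
                  (Pi.single m 1) (Pi.single k 1) * pd j₂ (fun b => x b t m) a)
                * pd j₁ (fun b => x b t k) a := by
          intro k
          rw [haccel t j₁ k, haccel t j₂ k]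
          ring
        rw [Finset.sum_congr rfl fun k _ => hsimp k]
        -- now pure algebra with symmetric Hessian
        have hsym : ∀ m k : Fin 3,
            fderiv ℝ (fderiv ℝ (fun y => p y t)) (x a t) (Pi.single m 1) (Pi.single k 1)
              = fderiv ℝ (fderiv ℝ (fun y => p y t)) (x a t) (Pi.single k 1) (Pi.single m 1) :=
          fun m k => pd_pd_symm (hqt t) (x a t) m k
        set h : Fin 3 → Fin 3 → ℝ := fun m k =>
          fderiv ℝ (fderiv ℝ (fun y => p y t)) (x a t) (Pi.single m 1) (Pi.single k 1) with hh
        set P : Fin 3 → Fin 3 → ℝ := fun j m => pd j (fun b => x b t m) a with hP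
        have expand : ∀ j₁' j₂' : Fin 3, (∑ k : Fin 3,
            (-∑ m, h m k * P j₁' m) * P j₂' k)
            = -∑ k : Fin 3, ∑ m : Fin 3, h m k * P j₁' m * P j₂' k := by
          intro j₁' j₂'
          rw [← Finset.sum_neg_distrib]
          refine Finset.sum_congr rfl fun k _ => ?_
          rw [neg_mul, Finset.sum_mul]
        have e1 : (∑ k : Fin 3,
            ((-∑ m, h m k * P j₁ m) * P j₂ k - (-∑ m, h m k * P j₂ m) * P j₁ k))
            = (-∑ k : Fin 3, ∑ m : Fin 3, h m k * P j₁ m * P j₂ k)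
              - (-∑ k : Fin 3, ∑ m : Fin 3, h m k * P j₂ m * P j₁ k) := by
          rw [Finset.sum_sub_distrib, expand j₁ j₂, expand j₂ j₁]
        rw [e1]
        have e2 : (∑ k : Fin 3, ∑ m : Fin 3, h m k * P j₂ m * P j₁ k)
            = ∑ k : Fin 3, ∑ m : Fin 3, h m k * P j₁ m * P j₂ k := by
          rw [Finset.sum_comm]
          refine Finset.sum_congr rfl fun k _ => Finset.sum_congr rfl fun m _ => ?_
          have hsym' : h k m = h m k := hsym k m
          rw [hsym']
          ring
        rw [e2]
        ring
      rw [← hzero]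
      exact hsum
    have hconst : Φ t₀ = Φ 0 :=
      is_const_of_deriv_eq_zero (fun t => (hderivΦ t).differentiableAt)
        (fun t => (hderivΦ t).deriv) t₀ 0
    have hΦ0 : Φ 0 = pd j₁ (fun b => v₀ b j₂) a - pd j₂ (fun b => v₀ b j₁) a := by
      have ev : ∀ j k : Fin 3, pd j (fun b => deriv (x b) 0 k) a
          = pd j (fun b => v₀ b k) a := by
        intro j k
        congr 1
        funext b
        rw [hvel b]
      have ex : ∀ j k : Fin 3, pd j (fun b => x b 0 k) a
          = (Pi.single j 1 : Fin 3 → ℝ) k := by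
        intro j k
        have : (fun b : Fin 3 → ℝ => x b 0 k) = fun b : Fin 3 → ℝ => b k := by
          funext b
          rw [hinit b]
        rw [this]
        exact pd_proj a j k
      rw [hΦ]
      simp only [ev, ex]
      rw [Finset.sum_sub_distrib]
      congr 1
      · simp [Pi.single_apply, mul_ite, Finset.sum_ite_eq, Finset.sum_ite_eq']
      · simp [Pi.single_apply, mul_ite, Finset.sum_ite_eq, Finset.sum_ite_eq']
    exact hconst.trans hΦ0
  -- finish componentwise
  funext i
  rw [Finset.sum_apply]
  fin_cases i
  · simpa [cross3, curl3, grad3] using key 1 2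
  · simpa [cross3, curl3, grad3] using key 2 0
  · simpa [cross3, curl3, grad3] using key 0 1
end
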